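/- arXiv:1712.04217 — 2 statements merged into one kernel-verified Lean document; each statement's English description precedes it below -/
import Mathlib

section
/- Let n, t be natural numbers with n ≥ 1 and t ≥ 2, and for each τ ∈ {1, …, t−1} let w_τ : Fin n × Fin n → ℚ be a weight function (the cost of assigning position i at time τ to position j at time τ+1). Then the minimum over all t-tuples (π_1, …, π_t) of permutations of Fin n of the total cost ∑_{τ=1}^{t−1} ∑_{i=1}^{n} w_τ(π_τ(i), π_{τ+1}(i)) equals the sum ∑_{τ=1}^{t−1} min_{σ ∈ Sym(Fin n)} ∑_{i=1}^{n} w_τ(i, σ(i)) of the optimal values of t−1 independent (minimum-weight perfect bipartite matching) assignment problems. (This is the decomposition underlying Theorem 3.1: the positionally determined Markov-type tracking problem Trac(d) decomposes into uncoupled minimum-weight perfect bipartite matching problems.) -/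
/-!
Step `τ` of a coupling `π` costs the assignment value of the relative permutation
`π (τ + 1) * (π τ)⁻¹`, and any sequence of relative permutations is realised by a coupling
(take partial products). So the steps can be optimised independently.
-/

open Finset Equiv

section Assignment

variable {α M : Type*} [Fintype α] [AddCommMonoid M]

def assignmentCost (c : α × α → M) (σ : Perm α) : M :=
  ∑ i, c (i, σ i)

theorem sum_apply_pair_eq_assignmentCost (c : α × α → M) (a b : Perm α) :
    ∑ i, c (a i, b i) = assignmentCost c (b * a⁻¹) := by
  rw [assignmentCost, ← Equiv.sum_comp a (fun i => c (i, (b * a⁻¹) i))]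
  simp

variable [DecidableEq α] [LinearOrder M]

def minAssignmentCost (c : α × α → M) : M :=
  univ.inf' univ_nonempty (assignmentCost c)

theorem minAssignmentCost_le (c : α × α → M) (a b : Perm α) :
    minAssignmentCost c ≤ ∑ i, c (a i, b i) :=
  (inf'_le _ (mem_univ _)).trans_eq (sum_apply_pair_eq_assignmentCost c a b).symm

theorem exists_assignmentCost_eq_minAssignmentCost (c : α × α → M) :
    ∃ σ, assignmentCost c σ = minAssignmentCost c :=
  let ⟨σ, _, hσ⟩ := exists_mem_eq_inf' univ_nonempty (assignmentCost c)
  ⟨σ, hσ.symm⟩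

end Assignment

theorem exists_forall_succ_eq_mul {G : Type*} [Monoid G] {m : ℕ} (σ : Fin m → G) :
    ∃ g : ℕ → G, ∀ τ : Fin m, g (τ + 1) = σ τ * g τ :=
  ⟨fun k => Nat.rec 1 (fun k acc => (if h : k < m then σ ⟨k, h⟩ else 1) * acc) k,
    fun τ => by simp [τ.isLt]⟩

/-- The positionally determined Markov-type tracking problem decomposes into `t-1`
uncoupled minimum-weight perfect bipartite matching (assignment) problems:
the minimum over all `t`-tuples of permutations of the total coupling cost equals
the sum over the time steps of the optimal assignment values. -/
theorem stmt_0 (n t : ℕ)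
    (w : Fin (t - 1) → Fin n × Fin n → ℚ) :
    Finset.univ.inf' Finset.univ_nonempty
      (fun π : Fin t → Equiv.Perm (Fin n) =>
        ∑ τ : Fin (t - 1), ∑ i : Fin n,
          w τ (π ⟨τ.1, by have := τ.isLt; omega⟩ i,
               π ⟨τ.1 + 1, by have := τ.isLt; omega⟩ i))
    = ∑ τ : Fin (t - 1), Finset.univ.inf' Finset.univ_nonempty
        (fun σ : Equiv.Perm (Fin n) => ∑ i : Fin n, w τ (i, σ i)) := by
  change _ = ∑ τ, minAssignmentCost (w τ)
  apply le_antisymm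
  · choose σ hσ using fun τ => exists_assignmentCost_eq_minAssignmentCost (w τ)
    obtain ⟨g, hg⟩ := exists_forall_succ_eq_mul σ
    refine (inf'_le _ (mem_univ fun k : Fin t => g k)).trans_eq (sum_congr rfl fun τ _ => ?_)
    rw [← hσ τ, ← mul_inv_cancel_right (σ τ) (g τ), ← hg τ, ← sum_apply_pair_eq_assignmentCost]
  · exact le_inf' _ _ fun π _ => sum_le_sum fun τ _ => minAssignmentCost_le _ _ _
end

section
/- Let G be a finite subset of ℤ × ℤ and let W_1, …, W_l ⊆ G be pairwise disjoint sets (windows) such that each W_i is contained in a single horizontal line ℤ × {c_i} or a single vertical line {r_i} × ℤ. Let A be the 0–1 point-line incidence matrix of G with respect to the horizontal and vertical lines (rows indexed by lines, columns by the points of G, entry 1 exactly when the point lies on the line), and let H be the 0–1 matrix whose i-th row is the indicator vector of W_i (columns indexed by the points of G). Then the stacked matrix consisting of the rows of A followed by the rows of H is totally unimodular. (This is the mathematical core of Theorem 4.2, implying that tomography under such window constraints is polynomial-time solvable via linear programming.) -/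
/-- The 0-1 point-line incidence matrix of a finite grid `G ⊆ ℤ × ℤ` (rows indexed by
the vertical lines `Sum.inl r` and the horizontal lines `Sum.inr c`) stacked on top of
the 0-1 indicator rows of windows `W i ⊆ G` (rows indexed by `Fin l`). -/
def gridWindowMatrix (G : Finset (ℤ × ℤ)) (l : ℕ) (W : Fin l → Finset (ℤ × ℤ)) :
    Matrix ((ℤ ⊕ ℤ) ⊕ Fin l) {p // p ∈ G} ℚ :=
  fun r p =>
    match r with
    | Sum.inl (Sum.inl a) => if p.val.1 = a then 1 else 0
    | Sum.inl (Sum.inr b) => if p.val.2 = b then 1 else 0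
    | Sum.inr i => if p.val ∈ W i then 1 else 0

/-!
Put every window in the class of the vertical or the horizontal lines according to a coordinate
line containing it. Each class is then a laminar family of depth two: disjoint lines, each
holding disjoint windows. In a square submatrix, subtracting from every line row the window rows
inside it is a unimodular row operation, after which every column has at most one `1` in each
class. Such a 0-1 matrix has determinant `0` or `±1`: either some column has a single `1`, and
we expand along it, or every nonempty column has exactly one `1` in each class, so the rows of
one class minus those of the other sum to zero.
-/

open Function

namespace Matrix

variable {m n κ R : Type*} [CommRing R]

lemma submatrix_of_indicator {m' κ' : Type*} (s : m → Set κ) (f : m' → m) (g : κ' → κ) :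
    (of fun x => (s x).indicator (1 : κ → R)).submatrix f g =
      of fun x => (g ⁻¹' s (f x)).indicator 1 := by
  ext x y
  simp [← Set.indicator_comp_right]

lemma det_one_add_eq_one_of_twoBlockStrict [Fintype n] [DecidableEq n] (C : Matrix n n R)
    (p : n → Prop) [DecidablePred p] (hC : ∀ i j, C i j ≠ 0 → p i ∧ ¬p j) : (1 + C).det = 1 := by
  have hblock : ∀ q : n → Prop, (∀ i j, q i → q j → ¬(p i ∧ ¬p j)) →
      toSquareBlockProp (1 + C) q = 1 := by
    intro q hq
    ext i j
    have : C i j = 0 := not_imp_comm.mp (hC i j) (hq i j i.2 j.2)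
    simp [toSquareBlockProp_def, one_apply, this, Subtype.ext_iff]
  rw [twoBlockTriangular_det (1 + C) p, hblock p (by tauto), hblock (¬p ·) (by tauto),
    det_one, det_one, one_mul]
  intro i hi j hj
  have hij : i ≠ j := by rintro rfl; exact hi hj
  simp [hij, not_imp_comm.mp (hC i j) (by tauto)]

lemma det_indicator_eq_zero_of_forall_shared [Fintype n] [DecidableEq n] [Nonempty n]
    (s : n → Set n) (cls : n → Bool)
    (hdisj : ∀ a b, a ≠ b → cls a = cls b → Disjoint (s a) (s b))
    (hshared : ∀ y a, y ∈ s a → ∃ b ≠ a, y ∈ s b) :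
    (of fun x => (s x).indicator (1 : n → R)).det = 0 := by
  set A : Matrix n n R := of fun x => (s x).indicator 1
  set v : n → R := fun x => if cls x then 1 else -1
  -- each nonempty column meets exactly one row of each class, so `±1`-weighted rows cancel
  have hcomb : ∑ x, v x • A x = 0 := by
    ext y
    simp only [Finset.sum_apply, Pi.smul_apply, smul_eq_mul, Pi.zero_apply, A, of_apply]
    by_cases hy : ∃ a, y ∈ s a
    · obtain ⟨a, ha⟩ := hy
      obtain ⟨b, hba, hb⟩ := hshared y a ha
      have hcls : cls a ≠ cls b := fun h => Set.disjoint_left.mp (hdisj a b hba.symm h) ha hb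
      rw [Finset.sum_eq_add a b hba.symm _ (by simp) (by simp)]
      · simp only [Set.indicator_of_mem ha, Set.indicator_of_mem hb, v]
        revert hcls
        cases cls a <;> cases cls b <;> simp
      · intro x _ hx
        rw [Set.indicator_of_notMem, mul_zero]
        intro hxy
        have : cls x = cls a ∨ cls x = cls b := by
          revert hcls
          cases cls x <;> cases cls a <;> cases cls b <;> decide
        rcases this with h | h
        · exact Set.disjoint_left.mp (hdisj x a hx.1 h) hxy ha
        · exact Set.disjoint_left.mp (hdisj x b hx.2 h) hxy hb
    · push Not at hy
      simp [hy]
  obtain ⟨x₀⟩ := ‹Nonempty n›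
  have hv : v x₀ * v x₀ = 1 := by simp only [v]; split_ifs <;> norm_num
  have h0 : v x₀ * A.det = 0 := by
    rw [← smul_eq_mul, ← det_updateRow_sum, hcomb]
    exact det_eq_zero_of_row_eq_zero x₀ (by simp)
  calc A.det = v x₀ * (v x₀ * A.det) := by rw [← mul_assoc, hv, one_mul]
    _ = 0 := by rw [h0, mul_zero]

lemma det_indicator_mem_range_of_disjoint {k : ℕ} (s : Fin k → Set (Fin k))
    (cls : Fin k → Bool)
    (hdisj : ∀ a b, a ≠ b → cls a = cls b → Disjoint (s a) (s b)) :
    (of fun x => (s x).indicator (1 : Fin k → R)).det ∈ Set.range SignType.cast := by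
  induction k with
  | zero => exact ⟨1, by simp⟩
  | succ k ih =>
    by_cases hprivate : ∃ y x₀, y ∈ s x₀ ∧ ∀ x, y ∈ s x → x = x₀
    · obtain ⟨y, x₀, hy, huniq⟩ := hprivate
      rw [det_succ_column _ y, Finset.sum_eq_single x₀ (fun x _ hx => ?_) (by simp)]
      · obtain ⟨σ, hσ⟩ := ih (fun x => y.succAbove ⁻¹' s (x₀.succAbove x)) (cls ∘ x₀.succAbove)
          fun a b hab hcls => (hdisj _ _ (x₀.succAbove_right_injective.ne hab) hcls).preimage _
        refine ⟨(-1) ^ (x₀ + y : ℕ) * σ, ?_⟩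
        rw [submatrix_of_indicator]
        simp [hσ, Set.indicator_of_mem hy]
      · simp [Set.indicator_of_notMem (mt (huniq x) hx)]
    · push Not at hprivate
      exact ⟨0, by
        rw [det_indicator_eq_zero_of_forall_shared s cls hdisj fun y a hy => ?_,
          SignType.coe_zero]
        obtain ⟨b, hb, hba⟩ := hprivate y a hy
        exact ⟨b, hba, hb⟩⟩

/-- `c a b` reads "row `a` is a child of row `b`": each class `cls⁻¹' {t}` is a laminar family
of depth at most two. -/
structure IsTwoClassLaminar (s : m → Set κ) (cls : m → Bool) (c : m → m → Prop) : Prop where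
  not_child_of_parent : ∀ a b d, c a b → ¬c b d
  subset_of_child : ∀ a b, c a b → s a ⊆ s b
  cls_eq_of_child : ∀ a b, c a b → cls a = cls b
  child_of_not_disjoint : ∀ a b, a ≠ b → cls a = cls b → ¬Disjoint (s a) (s b) → c a b ∨ c b a

namespace IsTwoClassLaminar

variable {s : m → Set κ} {cls : m → Bool} {c : m → m → Prop}

lemma comap {m' κ' : Type*} (h : IsTwoClassLaminar s cls c) {f : m' → m} (hf : Injective f)
    (g : κ' → κ) :
    IsTwoClassLaminar (fun x => g ⁻¹' s (f x)) (cls ∘ f) (fun a b => c (f a) (f b)) where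
  not_child_of_parent _ _ _ := h.not_child_of_parent _ _ _
  subset_of_child _ _ hab := Set.preimage_mono (h.subset_of_child _ _ hab)
  cls_eq_of_child _ _ := h.cls_eq_of_child _ _
  child_of_not_disjoint _ _ hab hcls hmeet :=
    h.child_of_not_disjoint _ _ (hf.ne hab) hcls fun hd => hmeet (hd.preimage g)

lemma disjoint_of_siblings (h : IsTwoClassLaminar s cls c) {a a' b : m} (ha : c a b)
    (ha' : c a' b) (hne : a ≠ a') : Disjoint (s a) (s a') := by
  by_contra hmeet
  have hcls : cls a = cls a' :=
    (h.cls_eq_of_child _ _ ha).trans (h.cls_eq_of_child _ _ ha').symm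
  rcases h.child_of_not_disjoint a a' hne hcls hmeet with hc | hc
  · exact h.not_child_of_parent _ _ _ hc ha'
  · exact h.not_child_of_parent _ _ _ hc ha

def prune (s : m → Set κ) (c : m → m → Prop) (x : m) : Set κ :=
  s x \ ⋃ (a) (_ : c a x), s a

lemma disjoint_prune (h : IsTwoClassLaminar s cls c) {a b : m} (hab : a ≠ b)
    (hcls : cls a = cls b) : Disjoint (prune s c a) (prune s c b) := by
  rw [Set.disjoint_left]
  rintro y ⟨hya, hya'⟩ ⟨hyb, hyb'⟩
  have hmeet : ¬Disjoint (s a) (s b) := Set.not_disjoint_iff.mpr ⟨y, hya, hyb⟩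
  rcases h.child_of_not_disjoint a b hab hcls hmeet with hc | hc
  · exact hyb' (Set.mem_biUnion hc hya)
  · exact hya' (Set.mem_biUnion hc hyb)

lemma indicator_prune_eq_mul [Fintype m] [DecidableEq m] [DecidableRel c]
    (h : IsTwoClassLaminar s cls c) :
    (of fun x => (prune s c x).indicator (1 : κ → R)) =
      (1 + of fun x a => if c a x then -1 else 0 : Matrix m m R) *
        (of fun x => (s x).indicator 1 : Matrix m κ R) := by
  ext x y
  rw [Matrix.add_mul, Matrix.one_mul]
  simp only [add_apply, mul_apply, of_apply, ite_mul, neg_one_mul, zero_mul]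
  by_cases hy : ∃ a, c a x ∧ y ∈ s a
  · obtain ⟨a, hax, hya⟩ := hy
    have hyx : y ∈ s x := h.subset_of_child _ _ hax hya
    have hy' : y ∉ prune s c x := fun hp => hp.2 (Set.mem_biUnion hax hya)
    rw [Finset.sum_eq_single a (fun b _ hba => ?_) (by simp)]
    · simp [hax, hya, hyx, hy']
    · split_ifs with hbx
      · have := Set.disjoint_left.mp (h.disjoint_of_siblings hax hbx hba.symm) hya
        simp [this]
      · rfl
  · push Not at hy
    rw [Finset.sum_eq_zero fun b _ => ?_]
    · have hprune : y ∈ prune s c x ↔ y ∈ s x := by simpa [prune] using fun _ => hy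
      by_cases hyx : y ∈ s x <;> simp [hyx, hprune]
    · split_ifs with hbx
      · simp [hy b hbx]
      · rfl

lemma det_indicator_prune [Fintype m] [DecidableEq m] {s : m → Set m}
    (h : IsTwoClassLaminar s cls c) :
    (of fun x => (prune s c x).indicator (1 : m → R)).det =
      (of fun x => (s x).indicator (1 : m → R)).det := by
  classical
  rw [h.indicator_prune_eq_mul, det_mul,
    det_one_add_eq_one_of_twoBlockStrict _ (fun x => ∃ a, c a x), one_mul]
  intro x a hxa
  have hax : c a x := by by_contra hna; simp [hna] at hxa
  exact ⟨⟨a, hax⟩, fun ⟨d, hda⟩ => h.not_child_of_parent _ _ _ hda hax⟩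

theorem isTotallyUnimodular_indicator (h : IsTwoClassLaminar s cls c) :
    (of fun x => (s x).indicator (1 : κ → R)).IsTotallyUnimodular := by
  intro k f g hf _
  have hk := h.comap hf g
  rw [submatrix_of_indicator, ← hk.det_indicator_prune]
  exact det_indicator_mem_range_of_disjoint _ _ fun a b hab hcls => hk.disjoint_prune hab hcls

end IsTwoClassLaminar

end Matrix

open Matrix

def axisLine : ℤ ⊕ ℤ → Set (ℤ × ℤ) :=
  Sum.elim (fun a => {p | p.1 = a}) (fun b => {p | p.2 = b})

lemma eq_of_mem_axisLine {L L' : ℤ ⊕ ℤ} (h : L.isLeft = L'.isLeft) {p : ℤ × ℤ}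
    (hp : p ∈ axisLine L) (hp' : p ∈ axisLine L') : L = L' := by
  rcases L with a | b <;> rcases L' with a' | b' <;> simp_all [axisLine]

lemma exists_subset_axisLine {S : Finset (ℤ × ℤ)}
    (h : (∃ c : ℤ, ∀ p ∈ S, p.2 = c) ∨ (∃ r : ℤ, ∀ p ∈ S, p.1 = r)) :
    ∃ L, ↑S ⊆ axisLine L := by
  rcases h with ⟨c, hc⟩ | ⟨r, hr⟩
  · exact ⟨Sum.inr c, hc⟩
  · exact ⟨Sum.inl r, hr⟩

def gridRows {l : ℕ} (W : Fin l → Finset (ℤ × ℤ)) : (ℤ ⊕ ℤ) ⊕ Fin l → Set (ℤ × ℤ) :=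
  Sum.elim axisLine fun i => ↑(W i)

lemma gridWindowMatrix_eq_submatrix (G : Finset (ℤ × ℤ)) (l : ℕ) (W : Fin l → Finset (ℤ × ℤ)) :
    gridWindowMatrix G l W =
      (of fun r => (gridRows W r).indicator (1 : ℤ × ℤ → ℚ)).submatrix id Subtype.val := by
  ext ((a | b) | i) p <;> simp [gridWindowMatrix, gridRows, axisLine, Set.indicator_apply]

lemma isTwoClassLaminar_gridRows {l : ℕ} {W : Fin l → Finset (ℤ × ℤ)}
    (hdisj : ∀ i j, i ≠ j → Disjoint (W i) (W j)) {parent : Fin l → ℤ ⊕ ℤ}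
    (hparent : ∀ i, ↑(W i) ⊆ axisLine (parent i)) :
    IsTwoClassLaminar (gridRows W) (Sum.elim Sum.isLeft fun i => (parent i).isLeft)
      (fun a b => ∃ i, a = Sum.inr i ∧ b = Sum.inl (parent i)) where
  not_child_of_parent := by
    rintro _ _ _ ⟨i, -, rfl⟩ ⟨j, h, -⟩
    cases h
  subset_of_child := by
    rintro _ _ ⟨i, rfl, rfl⟩
    exact hparent i
  cls_eq_of_child := by
    rintro _ _ ⟨i, rfl, rfl⟩
    rfl
  child_of_not_disjoint := by
    rintro (L | i) (L' | j) hne hcls hmeet <;>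
      obtain ⟨p, hp, hp'⟩ := Set.not_disjoint_iff.mp hmeet
    · exact absurd (congrArg Sum.inl (eq_of_mem_axisLine hcls hp hp')) hne
    · exact Or.inr ⟨j, rfl, congrArg Sum.inl (eq_of_mem_axisLine hcls hp (hparent j hp'))⟩
    · exact Or.inl ⟨i, rfl, congrArg Sum.inl (eq_of_mem_axisLine hcls (hparent i hp) hp').symm⟩
    · have hij : i ≠ j := fun h => hne (congrArg Sum.inr h)
      exact (Finset.disjoint_left.mp (hdisj i j hij) hp hp').elim

theorem stmt_13_general (G : Finset (ℤ × ℤ)) (l : ℕ) (W : Fin l → Finset (ℤ × ℤ))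
    (hdisj : ∀ i j, i ≠ j → Disjoint (W i) (W j))
    (hline : ∀ i, (∃ c : ℤ, ∀ p ∈ W i, p.2 = c) ∨ (∃ r : ℤ, ∀ p ∈ W i, p.1 = r)) :
    (gridWindowMatrix G l W).IsTotallyUnimodular := by
  choose parent hparent using fun i => exists_subset_axisLine (hline i)
  rw [gridWindowMatrix_eq_submatrix]
  exact ((isTwoClassLaminar_gridRows hdisj hparent).isTotallyUnimodular_indicator).submatrix _ _

/-- If the windows `W 1, …, W l ⊆ G` are pairwise disjoint and each is contained in a
single horizontal line `ℤ × {c}` or a single vertical line `{r} × ℤ`, then the matrix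
consisting of the X-ray (point-line incidence) rows of `G` for the two coordinate
directions followed by the indicator rows of the windows is totally unimodular. -/
theorem stmt_13 (G : Finset (ℤ × ℤ)) (l : ℕ) (W : Fin l → Finset (ℤ × ℤ))
    (hWG : ∀ i, W i ⊆ G)
    (hdisj : ∀ i j, i ≠ j → Disjoint (W i) (W j))
    (hline : ∀ i, (∃ c : ℤ, ∀ p ∈ W i, p.2 = c) ∨ (∃ r : ℤ, ∀ p ∈ W i, p.1 = r)) :
    (gridWindowMatrix G l W).IsTotallyUnimodular :=
  stmt_13_general G l W hdisj hline
end
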